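/- Let p̂ : {0,1}^4 → ℝ be the joint distribution of (X, Z, Y, S) induced by some reduced SCM, and suppose p̂(X = x, Z = z) > 0 and p̂(S = s, X = x) > 0 for all x, z, s ∈ {0,1}. Let γ = p̂(S = 1). Then the set of values of PNS = P(Y_{X=1} = 1 and Y_{X=0} = 0) attained by reduced SCMs whose induced joint distribution of (X, Z, Y, S) equals p̂ is exactly the set of values of the bilinear objective (q1_1 + q1_5)·h1 + (q1_2 + q1_6)·h2 as (q1, q2) ranges over the feasible region: q1 ∈ ℝ^8 and q2 ∈ ℝ^16 nonnegative, each summing to 1, satisfying for all x, y, z ∈ {0,1} the constraint Σ_{j with fX(j) = x and fY(z, j) = y} q1_j = p̂(Y = y | X = x, Z = z) · p̂(X = x), and for all s, x, z ∈ {0,1} the constraint Σ_{k with fZ(s, x, k) = z} q2_k = p̂(Z = z | S = s, X = x), where h1 = (1−γ)(q2_4 + q2_5 + q2_6 + q2_7) + γ(q2_1 + q2_5 + q2_9 + q2_13) and h2 = (1−γ)(q2_8 + q2_9 + q2_10 + q2_11) + γ(q2_2 + q2_6 + q2_10 + q2_14). -/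

import Mathlib

open Finset

attribute [local instance] Classical.propDecidable

/-- A reduced SCM as in the paper (with its exogenous types bundled):
exogenous `U1`, `U2`, a parameter `γ` for the binary pre-treatment variable
`S`, and mechanisms `fX`, `fZ`, `fY`. -/
structure ReducedSCM where
  U1 : Type
  U2 : Type
  [fin1 : Fintype U1]
  [fin2 : Fintype U2]
  p1 : U1 → ℝ
  p2 : U2 → ℝ
  gamma : ℝ
  p1_nonneg : ∀ u, 0 ≤ p1 u
  p2_nonneg : ∀ u, 0 ≤ p2 u
  p1_sum : ∑ u, p1 u = 1
  p2_sum : ∑ u, p2 u = 1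
  gamma_nonneg : 0 ≤ gamma
  gamma_le_one : gamma ≤ 1
  fX : U1 → Bool
  fZ : Bool → Bool → U2 → Bool
  fY : Bool → U1 → Bool

attribute [instance] ReducedSCM.fin1 ReducedSCM.fin2

namespace ReducedSCM

/-- Probability of a unit `(u1, u2, s)`. -/
def w (M : ReducedSCM) (u : M.U1 × M.U2 × Bool) : ℝ :=
  M.p1 u.1 * M.p2 u.2.1 * (if u.2.2 then M.gamma else 1 - M.gamma)

/-- Probability of an event. -/
noncomputable def P (M : ReducedSCM) (E : M.U1 × M.U2 × Bool → Prop) : ℝ :=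
  ∑ u, if E u then M.w u else 0

def S (M : ReducedSCM) (u : M.U1 × M.U2 × Bool) : Bool := u.2.2

def X (M : ReducedSCM) (u : M.U1 × M.U2 × Bool) : Bool := M.fX u.1

def Z (M : ReducedSCM) (u : M.U1 × M.U2 × Bool) : Bool := M.fZ (M.S u) (M.X u) u.2.1

def Y (M : ReducedSCM) (u : M.U1 × M.U2 × Bool) : Bool := M.fY (M.Z u) u.1

/-- Potential outcome `Y_{X=x}`. -/
def Yx (M : ReducedSCM) (x : Bool) (u : M.U1 × M.U2 × Bool) : Bool :=
  M.fY (M.fZ (M.S u) x u.2.1) u.1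

/-- Probability of necessity `PN = P(Y_{X=0} = 0, X = 1, Y = 1) / P(X = 1, Y = 1)`. -/
noncomputable def PN (M : ReducedSCM) : ℝ :=
  M.P (fun u => M.Yx false u = false ∧ M.X u = true ∧ M.Y u = true)
    / M.P (fun u => M.X u = true ∧ M.Y u = true)

/-- Probability of necessity and sufficiency `PNS = P(Y_{X=1} = 1, Y_{X=0} = 0)`. -/
noncomputable def PNS (M : ReducedSCM) : ℝ :=
  M.P (fun u => M.Yx true u = true ∧ M.Yx false u = false)

end ReducedSCM

/-- Canonical mechanism for `X`: `fX(j) = 1` iff `j ≥ 4`. -/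
def fXc (j : Fin 8) : Bool := decide (4 ≤ (j : ℕ))

/-- Canonical mechanism for `Y`: by the value of `j mod 4`, `Y` is `0`, `z`,
`1 - z`, or `1`. -/
def fYc (z : Bool) (j : Fin 8) : Bool :=
  if (j : ℕ) % 4 = 0 then false
  else if (j : ℕ) % 4 = 1 then z
  else if (j : ℕ) % 4 = 2 then !z
  else true

/-- Canonical mechanism for `Z`: writing `k = 8·b0 + 4·b1 + 2·b2 + b3`,
`fZ(s, x, k) = b_{2s+x}`. -/
def fZc (s x : Bool) (k : Fin 16) : Bool :=
  Nat.testBit (k : ℕ) (3 - (2 * s.toNat + x.toNat))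

/-- `h1 = (1−γ)(q2_4 + q2_5 + q2_6 + q2_7) + γ(q2_1 + q2_5 + q2_9 + q2_13)`. -/
def h1 (q2 : Fin 16 → ℝ) (γ : ℝ) : ℝ :=
  (1 - γ) * (q2 4 + q2 5 + q2 6 + q2 7) + γ * (q2 1 + q2 5 + q2 9 + q2 13)

/-- `h2 = (1−γ)(q2_8 + q2_9 + q2_10 + q2_11) + γ(q2_2 + q2_6 + q2_10 + q2_14)`. -/
def h2 (q2 : Fin 16 → ℝ) (γ : ℝ) : ℝ :=
  (1 - γ) * (q2 8 + q2 9 + q2 10 + q2 11) + γ * (q2 2 + q2 6 + q2 10 + q2 14)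

/-- Probability that a distribution `p̂` on `(x, z, y, s) ∈ {0,1}^4` assigns to
an event. -/
noncomputable def phatP (phat : Bool × Bool × Bool × Bool → ℝ)
    (E : Bool × Bool × Bool × Bool → Prop) : ℝ :=
  ∑ v, if E v then phat v else 0

/-- Conditional probability `p̂(A | B)`. -/
noncomputable def phatCond (phat : Bool × Bool × Bool × Bool → ℝ)
    (A B : Bool × Bool × Bool × Bool → Prop) : ℝ :=
  phatP phat (fun v => A v ∧ B v) / phatP phat B

/-- A reduced SCM induces `p̂` as the joint distribution of `(X, Z, Y, S)`. -/
def ReducedSCM.induces (M : ReducedSCM)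
    (phat : Bool × Bool × Bool × Bool → ℝ) : Prop :=
  ∀ x z y s : Bool,
    M.P (fun u => M.X u = x ∧ M.Z u = z ∧ M.Y u = y ∧ M.S u = s)
      = phat (x, z, y, s)

/-- The feasible region of the multilinear program: `q1 ∈ ℝ^8` and `q2 ∈ ℝ^16`
nonnegative, each summing to `1`, satisfying the linear constraints
`Σ_{j : fX(j) = x, fY(z, j) = y} q1_j = p̂(Y = y | X = x, Z = z) · p̂(X = x)` and
`Σ_{k : fZ(s, x, k) = z} q2_k = p̂(Z = z | S = s, X = x)`. -/
def feasible (phat : Bool × Bool × Bool × Bool → ℝ)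
    (q1 : Fin 8 → ℝ) (q2 : Fin 16 → ℝ) : Prop :=
  (∀ j, 0 ≤ q1 j) ∧ (∑ j, q1 j = 1) ∧ (∀ k, 0 ≤ q2 k) ∧ (∑ k, q2 k = 1) ∧
  (∀ x y z : Bool,
    (∑ j : Fin 8, if fXc j = x ∧ fYc z j = y then q1 j else 0)
      = phatCond phat (fun v => v.2.2.1 = y) (fun v => v.1 = x ∧ v.2.1 = z)
        * phatP phat (fun v => v.1 = x)) ∧
  (∀ s x z : Bool,
    (∑ k : Fin 16, if fZc s x k = z then q2 k else 0)
      = phatCond phat (fun v => v.2.1 = z) (fun v => v.2.2.2 = s ∧ v.1 = x))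

/-!
Observationally a reduced SCM is described by the factorisation
`P(X = x, Z = z, Y = y, S = s) = P₁(X = x, Y_z = y) · γ_s · P₂(Z_{s,x} = z)`, where `γ_1 = γ`,
`γ_0 = 1 - γ`, and `P₁`, `P₂` only see `u1`, `u2`.  When `p̂(X = x, Z = z)` and `p̂(S = s, X = x)`
are positive, the two factors are the conditionals `p̂(Y = y | x, z) · p̂(X = x)` and
`p̂(Z = z | s, x)`, and `γ = p̂(S = 1)`.  Pushing `p1` and `p2` forward to the 8 response types of
`(X, Y)` and the 16 response types of `Z` gives a canonical SCM with the same factors and the same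
PNS, whose PNS is the bilinear objective.  So the SCMs inducing `p̂` yield feasible points with
their PNS as value; conversely the canonical SCM of a feasible point has the factors of any SCM
inducing `p̂`, hence induces `p̂` itself.
-/

theorem sum_comp_mul_eq_sum_mul_fiber {α β : Type*} [Fintype α] [Fintype β] [DecidableEq β]
    (t : α → β) (F : β → ℝ) (w : α → ℝ) :
    ∑ a, F (t a) * w a = ∑ b, F b * ∑ a, if t a = b then w a else 0 := by
  simp_rw [Finset.mul_sum, mul_ite, mul_zero]
  rw [Finset.sum_comm]
  refine Finset.sum_congr rfl fun a _ => ?_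
  rw [Finset.sum_ite_eq, if_pos (Finset.mem_univ _)]

section Marginals

variable (p : Bool × Bool × Bool × Bool → ℝ)

theorem phatP_X (x : Bool) : phatP p (fun v => v.1 = x) = ∑ z, ∑ y, ∑ s, p (x, z, y, s) := by
  cases x <;> simp [phatP, Fintype.sum_prod_type]

theorem phatP_XZ (x z : Bool) :
    phatP p (fun v => v.1 = x ∧ v.2.1 = z) = ∑ y, ∑ s, p (x, z, y, s) := by
  cases x <;> cases z <;> simp [phatP, Fintype.sum_prod_type]

theorem phatP_YXZ (x z y : Bool) :
    phatP p (fun v => v.2.2.1 = y ∧ (v.1 = x ∧ v.2.1 = z)) = ∑ s, p (x, z, y, s) := by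
  cases x <;> cases z <;> cases y <;> simp [phatP, Fintype.sum_prod_type]

theorem phatP_SX (s x : Bool) :
    phatP p (fun v => v.2.2.2 = s ∧ v.1 = x) = ∑ z, ∑ y, p (x, z, y, s) := by
  cases x <;> cases s <;> simp [phatP, Fintype.sum_prod_type]

theorem phatP_ZSX (s x z : Bool) :
    phatP p (fun v => v.2.1 = z ∧ (v.2.2.2 = s ∧ v.1 = x)) = ∑ y, p (x, z, y, s) := by
  cases x <;> cases s <;> cases z <;> simp [phatP, Fintype.sum_prod_type]

theorem phatP_S (s : Bool) : phatP p (fun v => v.2.2.2 = s) = ∑ x, ∑ z, ∑ y, p (x, z, y, s) := by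
  cases s <;> simp [phatP, Fintype.sum_prod_type]

end Marginals

section ProductForm

variable {p : Bool × Bool × Bool × Bool → ℝ} {A B : Bool → Bool → Bool → ℝ} {g a : Bool → ℝ}

theorem phatP_YXZ_of_productForm (hp : ∀ x z y s, p (x, z, y, s) = A x z y * g s * B s x z)
    (x z y : Bool) :
    phatP p (fun v => v.2.2.1 = y ∧ (v.1 = x ∧ v.2.1 = z)) = A x z y * ∑ s, g s * B s x z := by
  simp_rw [phatP_YXZ, hp, mul_assoc, ← Finset.mul_sum]

theorem phatP_XZ_of_productForm (hp : ∀ x z y s, p (x, z, y, s) = A x z y * g s * B s x z)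
    (hA : ∀ x z, ∑ y, A x z y = a x) (x z : Bool) :
    phatP p (fun v => v.1 = x ∧ v.2.1 = z) = a x * ∑ s, g s * B s x z := by
  simp_rw [phatP_XZ, ← phatP_YXZ, phatP_YXZ_of_productForm hp, ← Finset.sum_mul, hA]

theorem phatP_ZSX_of_productForm (hp : ∀ x z y s, p (x, z, y, s) = A x z y * g s * B s x z)
    (hA : ∀ x z, ∑ y, A x z y = a x) (s x z : Bool) :
    phatP p (fun v => v.2.1 = z ∧ (v.2.2.2 = s ∧ v.1 = x)) = g s * B s x z * a x := by
  simp_rw [phatP_ZSX, hp, ← Finset.sum_mul, hA]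
  ring

theorem phatP_SX_of_productForm (hp : ∀ x z y s, p (x, z, y, s) = A x z y * g s * B s x z)
    (hA : ∀ x z, ∑ y, A x z y = a x) (hB : ∀ s x, ∑ z, B s x z = 1) (s x : Bool) :
    phatP p (fun v => v.2.2.2 = s ∧ v.1 = x) = g s * a x := by
  simp_rw [phatP_SX, ← phatP_ZSX, phatP_ZSX_of_productForm hp hA, ← Finset.sum_mul,
    ← Finset.mul_sum, hB, mul_one]

theorem phatP_X_of_productForm (hp : ∀ x z y s, p (x, z, y, s) = A x z y * g s * B s x z)
    (hA : ∀ x z, ∑ y, A x z y = a x) (hB : ∀ s x, ∑ z, B s x z = 1) (hg : ∑ s, g s = 1)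
    (x : Bool) : phatP p (fun v => v.1 = x) = a x := by
  have hSX := fun s => (phatP_SX p s x).symm.trans (phatP_SX_of_productForm hp hA hB s x)
  rw [phatP_X]
  simp only [Fintype.sum_bool] at hSX hg ⊢
  linear_combination hSX false + hSX true + a x * hg

theorem phatP_S_of_productForm (hp : ∀ x z y s, p (x, z, y, s) = A x z y * g s * B s x z)
    (hA : ∀ x z, ∑ y, A x z y = a x) (hB : ∀ s x, ∑ z, B s x z = 1) (ha : ∑ x, a x = 1)
    (s : Bool) : phatP p (fun v => v.2.2.2 = s) = g s := by
  simp_rw [phatP_S, ← phatP_SX, phatP_SX_of_productForm hp hA hB, ← Finset.mul_sum, ha, mul_one]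

theorem phatCond_Y_mul_phatP_X_of_productForm
    (hp : ∀ x z y s, p (x, z, y, s) = A x z y * g s * B s x z)
    (hA : ∀ x z, ∑ y, A x z y = a x) (hB : ∀ s x, ∑ z, B s x z = 1) (hg : ∑ s, g s = 1)
    {x z : Bool} (hXZ : phatP p (fun v => v.1 = x ∧ v.2.1 = z) ≠ 0) (y : Bool) :
    phatCond p (fun v => v.2.2.1 = y) (fun v => v.1 = x ∧ v.2.1 = z) * phatP p (fun v => v.1 = x)
      = A x z y := by
  rw [phatP_XZ_of_productForm hp hA] at hXZ
  obtain ⟨hax, hC⟩ := mul_ne_zero_iff.mp hXZ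
  simp only [phatCond]
  rw [phatP_YXZ_of_productForm hp, phatP_XZ_of_productForm hp hA,
    phatP_X_of_productForm hp hA hB hg]
  field_simp

theorem phatCond_Z_of_productForm (hp : ∀ x z y s, p (x, z, y, s) = A x z y * g s * B s x z)
    (hA : ∀ x z, ∑ y, A x z y = a x) (hB : ∀ s x, ∑ z, B s x z = 1)
    {s x : Bool} (hSX : phatP p (fun v => v.2.2.2 = s ∧ v.1 = x) ≠ 0) (z : Bool) :
    phatCond p (fun v => v.2.1 = z) (fun v => v.2.2.2 = s ∧ v.1 = x) = B s x z := by
  rw [phatP_SX_of_productForm hp hA hB] at hSX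
  obtain ⟨hgs, hax⟩ := mul_ne_zero_iff.mp hSX
  simp only [phatCond]
  rw [phatP_ZSX_of_productForm hp hA, phatP_SX_of_productForm hp hA hB]
  field_simp

end ProductForm

def responseIndex1 (x y0 y1 : Bool) : Fin 8 :=
  ⟨4 * x.toNat + 2 * y0.toNat + y1.toNat, by cases x <;> cases y0 <;> cases y1 <;> decide⟩

def responseIndex2 (z00 z01 z10 z11 : Bool) : Fin 16 :=
  ⟨8 * z00.toNat + 4 * z01.toNat + 2 * z10.toNat + z11.toNat, by
    cases z00 <;> cases z01 <;> cases z10 <;> cases z11 <;> decide⟩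

theorem fXc_responseIndex1 : ∀ x y0 y1, fXc (responseIndex1 x y0 y1) = x := by decide

theorem fYc_responseIndex1 : ∀ z x y0 y1, fYc z (responseIndex1 x y0 y1) = cond z y1 y0 := by
  decide

theorem fZc_responseIndex2 : ∀ s x z00 z01 z10 z11,
    fZc s x (responseIndex2 z00 z01 z10 z11) = cond s (cond x z11 z10) (cond x z01 z00) := by
  decide

def sWeight (γ : ℝ) (s : Bool) : ℝ := if s then γ else 1 - γ

theorem sum_sWeight (γ : ℝ) : ∑ s, sWeight γ s = 1 := by
  simp [sWeight]

theorem sum_ite_fYc_true_false (q1 : Fin 8 → ℝ) (z1 z0 : Bool) :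
    (∑ j, if fYc z1 j = true ∧ fYc z0 j = false then q1 j else 0)
      = (if z1 = true ∧ z0 = false then q1 1 + q1 5 else 0)
        + (if z1 = false ∧ z0 = true then q1 2 + q1 6 else 0) := by
  cases z1 <;> cases z0 <;> simp +decide [Fin.sum_univ_eight, fYc]

theorem h1_eq_sum (q2 : Fin 16 → ℝ) (γ : ℝ) :
    h1 q2 γ = ∑ s, sWeight γ s *
      ∑ k, if fZc s true k = true ∧ fZc s false k = false then q2 k else 0 := by
  simp +decide [Fin.sum_univ_succ, fZc, sWeight, h1]
  ring

theorem h2_eq_sum (q2 : Fin 16 → ℝ) (γ : ℝ) :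
    h2 q2 γ = ∑ s, sWeight γ s *
      ∑ k, if fZc s true k = false ∧ fZc s false k = true then q2 k else 0 := by
  simp +decide [Fin.sum_univ_succ, fZc, sWeight, h2]
  ring

namespace ReducedSCM

variable (M : ReducedSCM)

noncomputable def probX (x : Bool) : ℝ := ∑ u, if M.fX u = x then M.p1 u else 0

noncomputable def probXY (x z y : Bool) : ℝ :=
  ∑ u, if M.fX u = x ∧ M.fY z u = y then M.p1 u else 0

noncomputable def probZ (s x z : Bool) : ℝ := ∑ u, if M.fZ s x u = z then M.p2 u else 0

theorem sum_probX : ∑ x, M.probX x = 1 := by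
  rw [← M.p1_sum]
  simp only [probX]
  rw [Finset.sum_comm]
  exact Finset.sum_congr rfl fun u _ => by cases M.fX u <;> simp

theorem sum_probXY (x z : Bool) : ∑ y, M.probXY x z y = M.probX x := by
  simp only [probXY, probX]
  rw [Finset.sum_comm]
  exact Finset.sum_congr rfl fun u _ => by cases M.fY z u <;> simp

theorem sum_probZ (s x : Bool) : ∑ z, M.probZ s x z = 1 := by
  rw [← M.p2_sum]
  simp only [probZ]
  rw [Finset.sum_comm]
  exact Finset.sum_congr rfl fun u _ => by cases M.fZ s x u <;> simp

theorem P_product_event (E1 : M.U1 → Prop) (E2 : M.U2 → Prop) [DecidablePred E1] [DecidablePred E2]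
    (s : Bool) :
    M.P (fun u => E1 u.1 ∧ E2 u.2.1 ∧ u.2.2 = s)
      = (∑ u, if E1 u then M.p1 u else 0) * (∑ u, if E2 u then M.p2 u else 0)
          * sWeight M.gamma s := by
  have hS : sWeight M.gamma s = ∑ t, if t = s then sWeight M.gamma t else 0 := by
    rw [Finset.sum_ite_eq', if_pos (Finset.mem_univ s)]
  calc M.P (fun u => E1 u.1 ∧ E2 u.2.1 ∧ u.2.2 = s)
      = ∑ u : M.U1 × M.U2 × Bool, (if E1 u.1 then M.p1 u.1 else 0)
          * (if E2 u.2.1 then M.p2 u.2.1 else 0)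
          * (if u.2.2 = s then sWeight M.gamma u.2.2 else 0) := by
        refine Finset.sum_congr rfl fun ⟨u1, u2, t⟩ _ => ?_
        by_cases h1 : E1 u1 <;> by_cases h2 : E2 u2 <;> by_cases h3 : t = s <;>
          simp [w, sWeight, *]
    _ = _ := by
        rw [hS]
        simp only [Fintype.sum_prod_type, ← Finset.mul_sum, ← Finset.sum_mul]

theorem P_XZYS_eq_mul (x z y s : Bool) :
    M.P (fun u => M.X u = x ∧ M.Z u = z ∧ M.Y u = y ∧ M.S u = s)
      = M.probXY x z y * sWeight M.gamma s * M.probZ s x z := by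
  have hevent : (fun u => M.X u = x ∧ M.Z u = z ∧ M.Y u = y ∧ M.S u = s)
      = fun u => (M.fX u.1 = x ∧ M.fY z u.1 = y) ∧ M.fZ s x u.2.1 = z ∧ u.2.2 = s := by
    funext ⟨u1, u2, t⟩
    simp only [X, Z, Y, S]
    apply propext
    constructor
    · rintro ⟨rfl, rfl, rfl, rfl⟩
      exact ⟨⟨rfl, rfl⟩, rfl, rfl⟩
    · rintro ⟨⟨rfl, rfl⟩, rfl, rfl⟩
      exact ⟨rfl, rfl, rfl, rfl⟩
  rw [hevent, M.P_product_event (fun u1 => M.fX u1 = x ∧ M.fY z u1 = y)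
    (fun u2 => M.fZ s x u2 = z), mul_right_comm, probXY, probZ]

def responseType1 (u : M.U1) : Fin 8 := responseIndex1 (M.fX u) (M.fY false u) (M.fY true u)

def responseType2 (u : M.U2) : Fin 16 :=
  responseIndex2 (M.fZ false false u) (M.fZ false true u) (M.fZ true false u) (M.fZ true true u)

theorem fXc_responseType1 (u : M.U1) : fXc (M.responseType1 u) = M.fX u :=
  fXc_responseIndex1 _ _ _

theorem fYc_responseType1 (z : Bool) (u : M.U1) : fYc z (M.responseType1 u) = M.fY z u := by
  rw [responseType1, fYc_responseIndex1]
  cases z <;> rfl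

theorem fZc_responseType2 (s x : Bool) (u : M.U2) :
    fZc s x (M.responseType2 u) = M.fZ s x u := by
  rw [responseType2, fZc_responseIndex2]
  cases s <;> cases x <;> rfl

noncomputable def responseWeight1 (j : Fin 8) : ℝ :=
  ∑ u, if M.responseType1 u = j then M.p1 u else 0

noncomputable def responseWeight2 (k : Fin 16) : ℝ :=
  ∑ u, if M.responseType2 u = k then M.p2 u else 0

theorem responseWeight1_nonneg (j : Fin 8) : 0 ≤ M.responseWeight1 j :=
  Finset.sum_nonneg fun u _ => by split_ifs <;> simp [M.p1_nonneg u]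

theorem responseWeight2_nonneg (k : Fin 16) : 0 ≤ M.responseWeight2 k :=
  Finset.sum_nonneg fun u _ => by split_ifs <;> simp [M.p2_nonneg u]

theorem sum_responseWeight1 : ∑ j, M.responseWeight1 j = 1 := by
  have h := sum_comp_mul_eq_sum_mul_fiber M.responseType1 (fun _ => 1) M.p1
  simp only [one_mul] at h
  rw [← M.p1_sum, h]
  rfl

theorem sum_responseWeight2 : ∑ k, M.responseWeight2 k = 1 := by
  have h := sum_comp_mul_eq_sum_mul_fiber M.responseType2 (fun _ => 1) M.p2
  simp only [one_mul] at h
  rw [← M.p2_sum, h]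
  rfl

theorem probXY_eq_sum_responseWeight1 (x z y : Bool) :
    M.probXY x z y = ∑ j, if fXc j = x ∧ fYc z j = y then M.responseWeight1 j else 0 := by
  have h := sum_comp_mul_eq_sum_mul_fiber M.responseType1
    (fun j => if fXc j = x ∧ fYc z j = y then 1 else 0) M.p1
  simpa only [boole_mul, fXc_responseType1, fYc_responseType1, probXY, responseWeight1] using h

theorem probZ_eq_sum_responseWeight2 (s x z : Bool) :
    M.probZ s x z = ∑ k, if fZc s x k = z then M.responseWeight2 k else 0 := by
  have h := sum_comp_mul_eq_sum_mul_fiber M.responseType2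
    (fun k => if fZc s x k = z then 1 else 0) M.p2
  simpa only [boole_mul, fZc_responseType2, probZ, responseWeight2] using h

def canonical (q1 : Fin 8 → ℝ) (q2 : Fin 16 → ℝ) (γ : ℝ) (hq1 : ∀ j, 0 ≤ q1 j)
    (hq1_sum : ∑ j, q1 j = 1) (hq2 : ∀ k, 0 ≤ q2 k) (hq2_sum : ∑ k, q2 k = 1) (hγ0 : 0 ≤ γ)
    (hγ1 : γ ≤ 1) : ReducedSCM where
  U1 := Fin 8
  U2 := Fin 16
  p1 := q1
  p2 := q2
  gamma := γ
  p1_nonneg := hq1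
  p2_nonneg := hq2
  p1_sum := hq1_sum
  p2_sum := hq2_sum
  gamma_nonneg := hγ0
  gamma_le_one := hγ1
  fX := fXc
  fZ := fZc
  fY := fYc

noncomputable def toCanonical : ReducedSCM :=
  canonical M.responseWeight1 M.responseWeight2 M.gamma M.responseWeight1_nonneg
    M.sum_responseWeight1 M.responseWeight2_nonneg M.sum_responseWeight2 M.gamma_nonneg
    M.gamma_le_one

def responseType (u : M.U1 × M.U2 × Bool) : Fin 8 × Fin 16 × Bool :=
  (M.responseType1 u.1, M.responseType2 u.2.1, u.2.2)

theorem P_responseType_eq (v : Fin 8 × Fin 16 × Bool) :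
    M.P (fun u => M.responseType u = v)
      = M.responseWeight1 v.1 * M.responseWeight2 v.2.1 * sWeight M.gamma v.2.2 := by
  simp only [responseType, Prod.ext_iff]
  exact M.P_product_event (fun u1 => M.responseType1 u1 = v.1)
    (fun u2 => M.responseType2 u2 = v.2.1) v.2.2

theorem P_comp_responseType (E : Fin 8 × Fin 16 × Bool → Prop) :
    M.P (fun u => E (M.responseType u)) = M.toCanonical.P E := by
  have h := sum_comp_mul_eq_sum_mul_fiber M.responseType (fun v => if E v then 1 else 0) M.w
  simp only [boole_mul] at h
  rw [P, h]
  unfold P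
  refine Finset.sum_congr rfl fun v _ => ?_
  congr 1
  convert M.P_responseType_eq v using 1
  · -- the two sums differ only in their `Decidable` instances
    unfold P
    congr!
  · rfl

theorem toCanonical_Yx (x : Bool) (u : M.U1 × M.U2 × Bool) :
    M.toCanonical.Yx x (M.responseType u) = M.Yx x u := by
  simp only [toCanonical, canonical, Yx, S, responseType, fZc_responseType2, fYc_responseType1]

theorem PNS_toCanonical : M.toCanonical.PNS = M.PNS := by
  simp only [PNS, ← M.toCanonical_Yx]
  exact (M.P_comp_responseType _).symm

theorem PNS_canonical_eq_sum (q1 : Fin 8 → ℝ) (q2 : Fin 16 → ℝ) (γ : ℝ) (hq1 : ∀ j, 0 ≤ q1 j)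
    (hq1_sum : ∑ j, q1 j = 1) (hq2 : ∀ k, 0 ≤ q2 k) (hq2_sum : ∑ k, q2 k = 1) (hγ0 : 0 ≤ γ)
    (hγ1 : γ ≤ 1) :
    (canonical q1 q2 γ hq1 hq1_sum hq2 hq2_sum hγ0 hγ1).PNS
      = ∑ s, ∑ k, (∑ j, if fYc (fZc s true k) j = true ∧ fYc (fZc s false k) j = false
          then q1 j else 0) * (q2 k * sWeight γ s) := by
  rw [PNS, P]
  change ∑ u : Fin 8 × Fin 16 × Bool, _ = _
  simp only [Fintype.sum_prod_type_right, Finset.sum_mul]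
  refine Finset.sum_congr rfl fun s _ => Finset.sum_congr rfl fun k _ =>
    Finset.sum_congr rfl fun j _ => ?_
  by_cases h : fYc (fZc s true k) j = true ∧ fYc (fZc s false k) j = false
  · exact (if_pos h).trans (by rw [if_pos h]; simp only [canonical, w, sWeight]; ring)
  · exact (if_neg h).trans (by rw [if_neg h, zero_mul])

theorem canonical_PNS (q1 : Fin 8 → ℝ) (q2 : Fin 16 → ℝ) (γ : ℝ) (hq1 : ∀ j, 0 ≤ q1 j)
    (hq1_sum : ∑ j, q1 j = 1) (hq2 : ∀ k, 0 ≤ q2 k) (hq2_sum : ∑ k, q2 k = 1) (hγ0 : 0 ≤ γ)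
    (hγ1 : γ ≤ 1) :
    (canonical q1 q2 γ hq1 hq1_sum hq2 hq2_sum hγ0 hγ1).PNS
      = (q1 1 + q1 5) * h1 q2 γ + (q1 2 + q1 6) * h2 q2 γ := by
  rw [PNS_canonical_eq_sum, h1_eq_sum, h2_eq_sum]
  simp_rw [Finset.mul_sum, ← Finset.sum_add_distrib]
  refine Finset.sum_congr rfl fun s _ => Finset.sum_congr rfl fun k _ => ?_
  rw [sum_ite_fYc_true_false]
  split_ifs <;> ring

variable {M}

theorem induces.phat_eq {phat : Bool × Bool × Bool × Bool → ℝ} (h : M.induces phat)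
    (x z y s : Bool) :
    phat (x, z, y, s) = M.probXY x z y * sWeight M.gamma s * M.probZ s x z :=
  (h x z y s).symm.trans (M.P_XZYS_eq_mul x z y s)

theorem induces.probXY_eq {phat : Bool × Bool × Bool × Bool → ℝ} (h : M.induces phat)
    {x z : Bool} (hXZ : phatP phat (fun v => v.1 = x ∧ v.2.1 = z) ≠ 0) (y : Bool) :
    M.probXY x z y = phatCond phat (fun v => v.2.2.1 = y) (fun v => v.1 = x ∧ v.2.1 = z)
      * phatP phat (fun v => v.1 = x) :=
  (phatCond_Y_mul_phatP_X_of_productForm h.phat_eq M.sum_probXY M.sum_probZ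
    (sum_sWeight M.gamma) hXZ y).symm

theorem induces.probZ_eq {phat : Bool × Bool × Bool × Bool → ℝ} (h : M.induces phat)
    {s x : Bool} (hSX : phatP phat (fun v => v.2.2.2 = s ∧ v.1 = x) ≠ 0) (z : Bool) :
    M.probZ s x z = phatCond phat (fun v => v.2.1 = z) (fun v => v.2.2.2 = s ∧ v.1 = x) :=
  (phatCond_Z_of_productForm h.phat_eq M.sum_probXY M.sum_probZ hSX z).symm

theorem induces.gamma_eq {phat : Bool × Bool × Bool × Bool → ℝ} (h : M.induces phat) :
    M.gamma = phatP phat (fun v => v.2.2.2 = true) :=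
  (phatP_S_of_productForm h.phat_eq M.sum_probXY M.sum_probZ M.sum_probX true).symm

theorem induces_of_eq {N : ReducedSCM} {phat : Bool × Bool × Bool × Bool → ℝ}
    (hN : N.induces phat) (hXY : M.probXY = N.probXY) (hZ : M.probZ = N.probZ)
    (hγ : M.gamma = N.gamma) : M.induces phat := by
  intro x z y s
  rw [P_XZYS_eq_mul, hXY, hZ, hγ, ← N.P_XZYS_eq_mul]
  exact hN x z y s

end ReducedSCM

/-- If `p̂` is the joint distribution of `(X, Z, Y, S)` of some
reduced SCM, with `p̂(X = x, Z = z) > 0` and `p̂(S = s, X = x) > 0` for all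
`x, z, s`, and `γ = p̂(S = 1)`, then the set of PNS values attained by reduced
SCMs inducing `p̂` is exactly the set of values of the bilinear objective
`(q1_1 + q1_5)·h1 + (q1_2 + q1_6)·h2` over the feasible region. -/
theorem PNS_values_eq_bilinear_program
    (phat : Bool × Bool × Bool × Bool → ℝ)
    (hind : ∃ M0 : ReducedSCM, M0.induces phat)
    (hposXZ : ∀ x z : Bool, 0 < phatP phat (fun v => v.1 = x ∧ v.2.1 = z))
    (hposSX : ∀ s x : Bool, 0 < phatP phat (fun v => v.2.2.2 = s ∧ v.1 = x)) :
    {r : ℝ | ∃ M : ReducedSCM, M.induces phat ∧ M.PNS = r}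
      = {r : ℝ | ∃ (q1 : Fin 8 → ℝ) (q2 : Fin 16 → ℝ), feasible phat q1 q2 ∧
          r = (q1 1 + q1 5) * h1 q2 (phatP phat (fun v => v.2.2.2 = true))
              + (q1 2 + q1 6) * h2 q2 (phatP phat (fun v => v.2.2.2 = true))} := by
  obtain ⟨M0, hM0⟩ := hind
  ext r
  constructor
  · rintro ⟨M, hM, rfl⟩
    refine ⟨M.responseWeight1, M.responseWeight2, ⟨M.responseWeight1_nonneg,
      M.sum_responseWeight1, M.responseWeight2_nonneg, M.sum_responseWeight2,
      fun x y z => ?_, fun s x z => ?_⟩, ?_⟩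
    · rw [← M.probXY_eq_sum_responseWeight1, hM.probXY_eq (hposXZ x z).ne']
    · rw [← M.probZ_eq_sum_responseWeight2, hM.probZ_eq (hposSX s x).ne']
    · rw [← hM.gamma_eq, ← M.PNS_toCanonical]
      exact ReducedSCM.canonical_PNS ..
  · rintro ⟨q1, q2, ⟨hq1, hq1_sum, hq2, hq2_sum, hXY, hZ⟩, rfl⟩
    refine ⟨ReducedSCM.canonical q1 q2 M0.gamma hq1 hq1_sum hq2 hq2_sum M0.gamma_nonneg
      M0.gamma_le_one, ReducedSCM.induces_of_eq hM0 ?_ ?_ rfl, ?_⟩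
    · funext x z y
      exact (hXY x y z).trans (hM0.probXY_eq (hposXZ x z).ne' y).symm
    · funext s x z
      exact (hZ s x z).trans (hM0.probZ_eq (hposSX s x).ne' z).symm
    · rw [ReducedSCM.canonical_PNS, hM0.gamma_eq]
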